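/- Let m > 0 and c ∈ (0, m). Define F_χ(c) = [c(m−c)(m+2) / (4(m²+6m+6))] · [(2m+2)c² − (m²−4m−6)c + m² + 6m + 6]. Then F_χ(c) > 0 for all c ∈ (0,m) if and only if the quadratic q(c) = (2m+2)c² − (m²−4m−6)c + m² + 6m + 6 is positive on (0, m); and q is positive on (0,m) for all m below the unique positive real root k₁ of m⁴ − 16m³ − 52m² − 48m − 12, while for m > k₁ there exists c ∈ (0,m) with F_χ(c) < 0. -/
import Mathlib


/-- The quadratic factor of the modified Futaki invariant. -/
def quadFactor (m c : ℝ) : ℝ :=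
  (2 * m + 2) * c ^ 2 - (m ^ 2 - 4 * m - 6) * c + m ^ 2 + 6 * m + 6

/-- The modified Futaki invariant of the deformation to the normal cone of the
infinity section of the ruled surface, as a function of the parameter `c`. -/
noncomputable def modFutaki (m c : ℝ) : ℝ :=
  c * (m - c) * (m + 2) / (4 * (m ^ 2 + 6 * m + 6)) * quadFactor m c

private lemma contP : Continuous (fun x : ℝ => x ^ 4 - 16 * x ^ 3 - 52 * x ^ 2 - 48 * x - 12) := by
  continuity

/-- `F_χ(c) > 0` on `(0,m)` iff the quadratic `q` is positive on
`(0,m)`; `q` is positive on `(0,m)` for `m` below the unique positive root `k₁`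
of `m⁴ − 16m³ − 52m² − 48m − 12`, while for `m > k₁` there is `c ∈ (0,m)` with
`F_χ(c) < 0`. -/
theorem stmt_15 (k₁ : ℝ) (hk₁pos : 0 < k₁)
    (hk₁root : k₁ ^ 4 - 16 * k₁ ^ 3 - 52 * k₁ ^ 2 - 48 * k₁ - 12 = 0)
    (hk₁uniq : ∀ x : ℝ, 0 < x →
      x ^ 4 - 16 * x ^ 3 - 52 * x ^ 2 - 48 * x - 12 = 0 → x = k₁) :
    ∀ m : ℝ, 0 < m →
      ((∀ c, 0 < c → c < m → 0 < modFutaki m c) ↔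
        (∀ c, 0 < c → c < m → 0 < quadFactor m c)) ∧
      (m < k₁ → ∀ c, 0 < c → c < m → 0 < quadFactor m c) ∧
      (k₁ < m → ∃ c, 0 < c ∧ c < m ∧ modFutaki m c < 0) := by
  intro m hm
  have hden : (0:ℝ) < m ^ 2 + 6 * m + 6 := by nlinarith
  have hpre : ∀ c : ℝ, 0 < c → c < m →
      0 < c * (m - c) * (m + 2) / (4 * (m ^ 2 + 6 * m + 6)) := by
    intro c hc hcm
    apply div_pos
    · have : 0 < m - c := by linarith
      positivity
    · positivity
  refine ⟨⟨fun hF c hc hcm => ?_, fun hq c hc hcm => ?_⟩, fun hmk c hc hcm => ?_, fun hkm => ?_⟩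
  · have h := hF c hc hcm
    have hp := hpre c hc hcm
    unfold modFutaki at h
    by_contra hle
    push_neg at hle
    nlinarith [mul_nonpos_of_nonneg_of_nonpos hp.le hle]
  · exact mul_pos (hpre c hc hcm) (hq c hc hcm)
  · -- m < k₁ : discriminant is negative
    have hD : m ^ 4 - 16 * m ^ 3 - 52 * m ^ 2 - 48 * m - 12 < 0 := by
      by_contra h
      push_neg at h
      rcases eq_or_lt_of_le h with h0 | h0
      · exact absurd (hk₁uniq m hm h0.symm) (by linarith)
      · have hsub : Set.Ioo ((0:ℝ) ^ 4 - 16 * 0 ^ 3 - 52 * 0 ^ 2 - 48 * 0 - 12)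
            (m ^ 4 - 16 * m ^ 3 - 52 * m ^ 2 - 48 * m - 12) ⊆
            (fun x : ℝ => x ^ 4 - 16 * x ^ 3 - 52 * x ^ 2 - 48 * x - 12) '' Set.Ioo 0 m :=
          intermediate_value_Ioo hm.le contP.continuousOn
        have h0mem : (0:ℝ) ∈ Set.Ioo ((0:ℝ) ^ 4 - 16 * 0 ^ 3 - 52 * 0 ^ 2 - 48 * 0 - 12)
            (m ^ 4 - 16 * m ^ 3 - 52 * m ^ 2 - 48 * m - 12) := by
          constructor <;> norm_num; linarith
        obtain ⟨x, hx, hx0⟩ := hsub h0mem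
        have hxk : x = k₁ := hk₁uniq x hx.1 hx0
        rw [hxk] at hx
        linarith [hx.2]
    unfold quadFactor
    nlinarith [sq_nonneg (2 * (2 * m + 2) * c - (m ^ 2 - 4 * m - 6)), sq_nonneg c, mul_pos hc (sub_pos.mpr hcm)]
  · -- k₁ < m : discriminant positive, pick the vertex
    have hD : 0 < m ^ 4 - 16 * m ^ 3 - 52 * m ^ 2 - 48 * m - 12 := by
      by_contra h
      push_neg at h
      rcases eq_or_lt_of_le h with h0 | h0
      · exact absurd (hk₁uniq m hm h0) (by linarith)
      · have hM : 0 < (m + 20) ^ 4 - 16 * (m + 20) ^ 3 - 52 * (m + 20) ^ 2 - 48 * (m + 20) - 12 := by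
          nlinarith [pow_pos hm 3, pow_pos hm 4, sq_nonneg m, hm]
        have hsub : Set.Ioo (m ^ 4 - 16 * m ^ 3 - 52 * m ^ 2 - 48 * m - 12)
            ((m + 20) ^ 4 - 16 * (m + 20) ^ 3 - 52 * (m + 20) ^ 2 - 48 * (m + 20) - 12) ⊆
            (fun x : ℝ => x ^ 4 - 16 * x ^ 3 - 52 * x ^ 2 - 48 * x - 12) '' Set.Ioo m (m + 20) :=
          intermediate_value_Ioo (by linarith) contP.continuousOn
        obtain ⟨x, hx, hx0⟩ := hsub ⟨h0, hM⟩
        have hxk : x = k₁ := hk₁uniq x (by linarith [hx.1]) hx0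
        rw [hxk] at hx
        linarith [hx.1]
    have h16 : 16 < m := by
      by_contra h
      push_neg at h
      nlinarith [pow_pos hm 3, mul_nonneg (pow_pos hm 3).le (sub_nonneg.mpr h)]
    have hnum : 0 < m ^ 2 - 4 * m - 6 := by nlinarith
    have hd2 : (0:ℝ) < 2 * (2 * m + 2) := by linarith
    set c₀ : ℝ := (m ^ 2 - 4 * m - 6) / (2 * (2 * m + 2)) with hc₀
    have hc₀pos : 0 < c₀ := div_pos hnum hd2
    have hc₀lt : c₀ < m := by
      rw [hc₀, div_lt_iff₀ hd2]
      nlinarith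
    have hq : quadFactor m c₀ < 0 := by
      have hident : 4 * (2 * m + 2) * quadFactor m c₀ =
          -(m ^ 4 - 16 * m ^ 3 - 52 * m ^ 2 - 48 * m - 12) := by
        rw [hc₀]
        unfold quadFactor
        field_simp
        ring
      nlinarith
    refine ⟨c₀, hc₀pos, hc₀lt, ?_⟩
    exact mul_neg_of_pos_of_neg (hpre c₀ hc₀pos hc₀lt) hq
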